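/- Assume conditions (a) and (c). Let A be an object of E, and let α : S(p) → A and α' : S(p') → A be epimorphisms in E, where p and p' are objects of D. By (c) and exactness of G, the surjection G(α) : T(p) → G(A) induces a unique left End(T)-module structure on G(A) making G(α) End(T)-linear, and likewise for G(α'). Then these two End(T)-module structures on G(A) coincide. (This is the step in the proof of Proposition 2.7 showing that the object V(A,α) of Nori's universal category is independent of the chosen presentation α.) -/

import Mathlib

/-!
Condition (a) gives `i : p ⟶ q`, `i' : p' ⟶ q` with `T i + T i'` an isomorphism. Since `G` is
faithful and `E` is abelian, `G` reflects isomorphisms, so `S i + S i' : S p ⊞ S p' ⟶ S q` is an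
isomorphism too, and `α`, `α'` factor through a single `w : S q ⟶ A`. If `G α x = G α' y`, then
`T i x - T i' y` lies in the kernel of `G w`, which is `End T`-stable by (c); naturality of `a`
moves `a` inside, giving `G α (a x) = G α' (a y)`.
-/

open CategoryTheory CategoryTheory.Limits

namespace NoriCriterion

universe u

theorem apply_eq_apply_of_mapsTo_ker {M M' P N : Type*} [AddCommGroup P] [AddCommGroup N]
    (u : P →+ N) (b : P →+ P) (hb : Set.MapsTo b u.ker u.ker)
    {f : M → P} {f' : M' → P} {a : M → M} {a' : M' → M'}
    (ha : ∀ x, b (f x) = f (a x)) (ha' : ∀ y, b (f' y) = f' (a' y))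
    {x : M} {y : M'} (h : u (f x) = u (f' y)) : u (f (a x)) = u (f' (a' y)) := by
  have := hb (show f x - f' y ∈ u.ker by rw [AddMonoidHom.mem_ker, map_sub, h, sub_self])
  rwa [SetLike.mem_coe, AddMonoidHom.mem_ker, map_sub, map_sub, ha, ha', sub_eq_zero] at this

theorem isIso_biprod_desc_map_of_iso {D C : Type*} [Category D] [Category C] [Preadditive C]
    [HasBinaryBiproducts C] {F F' : D ⥤ C} (η : F ≅ F') {p p' q : D} (i : p ⟶ q) (i' : p' ⟶ q)
    [IsIso (biprod.desc (F.map i) (F.map i'))] : IsIso (biprod.desc (F'.map i) (F'.map i')) := by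
  have : biprod.desc (F'.map i) (F'.map i') = (biprod.mapIso (η.app p) (η.app p')).inv ≫
      biprod.desc (F.map i) (F.map i') ≫ η.hom.app q := by
    apply biprod.hom_ext' <;> simp
  rw [this]
  infer_instance

theorem isIso_of_isIso_map_biprod_desc {E C : Type*} [Category E] [Category C] [Preadditive E]
    [Preadditive C] [HasBinaryBiproducts E] [HasBinaryBiproducts C] [Balanced E]
    (G : E ⥤ C) [G.Faithful] [G.Additive] {X Y Z : E} (f : X ⟶ Z) (g : Y ⟶ Z)
    [IsIso (biprod.desc (G.map f) (G.map g))] : IsIso (biprod.desc f g) := by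
  have := preservesBinaryBiproducts_of_preservesBiproducts G
  have : IsIso (G.map (biprod.desc f g)) := by
    rw [← biprod.mapBiprod_hom_desc]
    infer_instance
  exact isIso_of_reflects_iso _ G

theorem exists_comp_eq_of_isIso_biprod_desc {C : Type*} [Category C] [Preadditive C]
    {X Y Z A : C} [HasBinaryBiproduct X Y] (f : X ⟶ Z) (g : Y ⟶ Z) [IsIso (biprod.desc f g)]
    (α : X ⟶ A) (β : Y ⟶ A) : ∃ w : Z ⟶ A, f ≫ w = α ∧ g ≫ w = β := by
  refine ⟨inv (biprod.desc f g) ≫ biprod.desc α β, ?_, ?_⟩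
  · rw [← Category.assoc, (IsIso.comp_inv_eq _).2 (biprod.inl_desc f g).symm, biprod.inl_desc]
  · rw [← Category.assoc, (IsIso.comp_inv_eq _).2 (biprod.inr_desc f g).symm, biprod.inr_desc]

/-- **Independence of the presentation** (step in the proof of Proposition
2.7, finite-diagram form): under conditions (a) and (c), for epimorphisms
`α : S.obj p ⟶ A` and `α' : S.obj p' ⟶ A`, the `End T`-module structures
induced on `G A` by `G α` and by `G α'` coincide. -/
theorem induced_module_structure_independent
    {R : Type u} [CommRing R] [IsNoetherianRing R]
    {D : Type u} [SmallCategory D] [FinCategory D]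
    (T : D ⥤ ModuleCat.{u} R)
    [∀ p : D, Module.Finite R (T.obj p)]
    {E : Type u} [Category.{u} E] [Abelian E] [Linear R E]
    (G : E ⥤ ModuleCat.{u} R) [G.Faithful] [G.Additive] [G.Linear R]
    [PreservesFiniteLimits G] [PreservesFiniteColimits G]
    (hGfin : ∀ A : E, Module.Finite R (G.obj A))
    (S : D ⥤ E) (η : S ⋙ G ≅ T)
    -- condition (a)
    (conda : ∀ p p' : D, ∃ (q : D) (i : p ⟶ q) (i' : p' ⟶ q),
      IsIso (biprod.desc (T.map i) (T.map i')))
    -- condition (c)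
    (condc : ∀ (p : D) (A : E) (w : S.obj p ⟶ A) (a : End T) (x : T.obj p),
      (η.inv.app p ≫ G.map w) x = 0 →
        (η.inv.app p ≫ G.map w) ((a.app p) x) = 0)
    (p p' : D) (A : E)
    (α : S.obj p ⟶ A) (hα : Epi α)
    (α' : S.obj p' ⟶ A) (hα' : Epi α') :
    ∀ (a : End T) (x : T.obj p) (y : T.obj p'),
      (η.inv.app p ≫ G.map α) x = (η.inv.app p' ≫ G.map α') y →
        (η.inv.app p ≫ G.map α) ((a.app p) x) =
          (η.inv.app p' ≫ G.map α') ((a.app p') y) := by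
  intro a x y hxy
  obtain ⟨q, i, i', hT⟩ := conda p p'
  have : IsIso (biprod.desc (G.map (S.map i)) (G.map (S.map i'))) :=
    isIso_biprod_desc_map_of_iso η.symm i i'
  have : IsIso (biprod.desc (S.map i) (S.map i')) := isIso_of_isIso_map_biprod_desc G _ _
  obtain ⟨w, hw, hw'⟩ := exists_comp_eq_of_isIso_biprod_desc (S.map i) (S.map i') α α'
  have hu : ∀ {r : D} (j : r ⟶ q) (z : T.obj r),
      (η.inv.app q ≫ G.map w) (T.map j z) = (η.inv.app r ≫ G.map (S.map j ≫ w)) z := by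
    intro r j z
    rw [← ConcreteCategory.comp_apply, η.inv.naturality_assoc, Functor.comp_map, G.map_comp]
  rw [← hw, ← hw', ← hu, ← hu] at hxy ⊢
  exact apply_eq_apply_of_mapsTo_ker (η.inv.app q ≫ G.map w).hom.toAddMonoidHom
    (a.app q).hom.toAddMonoidHom (condc q A w a) (f := T.map i) (f' := T.map i')
    (fun _ ↦ ConcreteCategory.congr_hom (a.naturality i) _)
    (fun _ ↦ ConcreteCategory.congr_hom (a.naturality i') _) hxy

end NoriCriterion
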